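/- A morphism between objects of 𝒞 is an acyclic cofibration if and only if it is both a cofibration and a weak equivalence. Moreover, every ℰ-admissible epimorphism between objects of 𝒞 whose kernel lies in 𝒵 is a weak equivalence. -/

import Mathlib

open CategoryTheory CategoryTheory.Limits

universe v u

variable {𝒜 : Type u} [Category.{v} 𝒜] [Abelian 𝒜]

/-- `(f, g)` forms a short exact sequence `0 ⟶ X ⟶ Y ⟶ Z ⟶ 0` in the ambient
abelian category `𝒜`. -/
def IsShortExactSeq {X Y Z : 𝒜} (f : X ⟶ Y) (g : Y ⟶ Z) : Prop :=
  ∃ w : f ≫ g = 0, (ShortComplex.mk f g w).ShortExact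

/-- A class of objects is closed under isomorphisms. -/
def IsoClosed (P : 𝒜 → Prop) : Prop := ∀ ⦃X Y : 𝒜⦄, (X ≅ Y) → P X → P Y

/-- `Ext¹(X, Y) = 0` relative to the exact subcategory determined by `E`:
every short exact sequence `0 ⟶ Y ⟶ M ⟶ X ⟶ 0` in `E` splits. -/
def Ext1IsZero (E : 𝒜 → Prop) (X Y : 𝒜) : Prop :=
  ∀ ⦃M : 𝒜⦄ (f : Y ⟶ M) (g : M ⟶ X), E M → IsShortExactSeq f g →
    ∃ r : M ⟶ Y, f ≫ r = 𝟙 Y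

/-- `(C, I)` is a cotorsion pair in the exact subcategory of `𝒜` determined by
the class of objects `E`: the two classes are each other's orthogonal
complement with respect to `Ext¹`. -/
structure IsCotorsionPair (E C I : 𝒜 → Prop) : Prop where
  right_eq : ∀ Y, I Y ↔ (E Y ∧ ∀ ⦃X⦄, C X → Ext1IsZero E X Y)
  left_eq : ∀ X, C X ↔ (E X ∧ ∀ ⦃Y⦄, I Y → Ext1IsZero E X Y)

/-- The cotorsion pair `(C, I)` in `E` is complete: every object of `E` admits
both kinds of approximation sequences. -/
def IsCompleteCP (E C I : 𝒜 → Prop) : Prop :=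
  (∀ A, E A → ∃ (Y P : 𝒜) (f : A ⟶ Y) (g : Y ⟶ P),
      I Y ∧ C P ∧ IsShortExactSeq f g) ∧
  (∀ A, E A → ∃ (Y P : 𝒜) (f : Y ⟶ P) (g : P ⟶ A),
      I Y ∧ C P ∧ IsShortExactSeq f g)

/-- The cotorsion pair is hereditary: `C` is closed under kernels of
admissible epimorphisms in `E`. -/
def IsHereditaryCP (E C : 𝒜 → Prop) : Prop :=
  ∀ ⦃X Y Z : 𝒜⦄ (f : X ⟶ Y) (g : Y ⟶ Z),
    IsShortExactSeq f g → E X → C Y → C Z → C X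

/-- A cofibration: an admissible monomorphism between objects of `C` whose
cokernel lies in `C`. -/
def IsCofib (C : 𝒜 → Prop) {X Y : 𝒜} (f : X ⟶ Y) : Prop :=
  C X ∧ C Y ∧ ∃ (W : 𝒜) (g : Y ⟶ W), C W ∧ IsShortExactSeq f g

/-- An acyclic fibration: an admissible epimorphism in `E` whose kernel lies
in `I`. -/
def IsAcyclicFib (E I : 𝒜 → Prop) {Y Z : 𝒜} (g : Y ⟶ Z) : Prop :=
  E Y ∧ E Z ∧ ∃ (K : 𝒜) (k : K ⟶ Y), I K ∧ IsShortExactSeq k g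

/-- An acyclic cofibration: an admissible monomorphism between objects of `C`
whose cokernel lies in `C ∩ Z`. -/
def IsAcyclicCofib (C Zc : 𝒜 → Prop) {X Y : 𝒜} (f : X ⟶ Y) : Prop :=
  C X ∧ C Y ∧ ∃ (W : 𝒜) (g : Y ⟶ W), C W ∧ Zc W ∧ IsShortExactSeq f g

/-- A weak equivalence: a morphism between objects of `C` that factors as an
acyclic cofibration followed by an acyclic fibration. -/
def IsWeakEquiv (E C I Zc : 𝒜 → Prop) {X Y : 𝒜} (f : X ⟶ Y) : Prop :=
  C X ∧ C Y ∧ ∃ (M : 𝒜) (i : X ⟶ M) (p : M ⟶ Y),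
    IsAcyclicCofib C Zc i ∧ IsAcyclicFib E I p ∧ i ≫ p = f

/-- The standing setup: a complete hereditary cotorsion pair `(Cc, Ip)` in the
exact subcategory of `𝒜` determined by the isomorphism-closed,
extension-closed class `E`, together with an isomorphism-closed class
`Zc ⊆ E` with `Ip ⊆ Zc`, such that `Zc ∩ Cc` is closed under extensions and
under cokernels of admissible monomorphisms in `Cc`. -/
structure CotorsionSetup (E Cc Ip Zc : 𝒜 → Prop) : Prop where
  isoE : IsoClosed E
  isoC : IsoClosed Cc
  isoI : IsoClosed Ip
  isoZ : IsoClosed Zc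
  extClosedE : ∀ ⦃X Y Z : 𝒜⦄ (f : X ⟶ Y) (g : Y ⟶ Z),
    IsShortExactSeq f g → E X → E Z → E Y
  cp : IsCotorsionPair E Cc Ip
  complete : IsCompleteCP E Cc Ip
  hereditary : IsHereditaryCP E Cc
  zSubE : ∀ ⦃X⦄, Zc X → E X
  iSubZ : ∀ ⦃X⦄, Ip X → Zc X
  zcExtClosed : ∀ ⦃X Y Z : 𝒜⦄ (f : X ⟶ Y) (g : Y ⟶ Z), IsShortExactSeq f g →
    Cc X → Cc Y → Cc Z → Zc X → Zc Z → Zc Y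
  zcCokerClosed : ∀ ⦃X Y Z : 𝒜⦄ (f : X ⟶ Y) (g : Y ⟶ Z), IsShortExactSeq f g →
    Cc X → Cc Y → Cc Z → Zc X → Zc Y → Zc Z

/-!
Everything rests on three facts about short exact sequences in an abelian category: they are
stable under pullback and pushout, and compatible admissible monomorphisms `X ↪ M`, `X ↪ Y`
over an extension `0 → J → M → Y → 0` induce an extension `0 → J → M/X → Y/X → 0`.
The left class of a cotorsion pair is closed under extensions: given `0 → X → Y → Z → 0` with
`X, Z ∈ 𝒞` and `0 → J → M → Y → 0` with `J ∈ 𝒞⊥`, the map `X → Y` lifts to `M` because the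
pulled-back extension of `X` splits, and then `0 → J → M/X → Z → 0` splits, which gives a
retraction of `J → M`.

An acyclic cofibration `f : X → Y` with cokernel `W` factors as `X → Y ⊕ G → Y`, where
`G ∈ 𝒞 ∩ 𝒞⊥` is the middle term of an approximation `0 → X → G → P → 0`; the first map has
cokernel an extension of `W` by `G`. Conversely, if a cofibration `f = p ∘ i` is a weak
equivalence, the extension `0 → ker p → coker i → coker f → 0` puts `ker p` in `𝒞` by heredity,
and then `coker f` in `𝒵`. An admissible epimorphism `X → Y` with kernel `K ∈ 𝒵` factors
through the pushout of an approximation `0 → K → I → P → 0` (`I ∈ 𝒞⊥`, `P ∈ 𝒞`) along `K → X`.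
-/

def IsExtensionClosed (P : 𝒜 → Prop) : Prop :=
  ∀ ⦃X Y Z : 𝒜⦄ (f : X ⟶ Y) (g : Y ⟶ Z), IsShortExactSeq f g → P X → P Z → P Y

namespace IsShortExactSeq

variable {J K M P Q X Y Z : 𝒜}

lemma mono {f : X ⟶ Y} {g : Y ⟶ Z} (h : IsShortExactSeq f g) : Mono f := h.2.mono_f

lemma epi {f : X ⟶ Y} {g : Y ⟶ Z} (h : IsShortExactSeq f g) : Epi g := h.2.epi_g

lemma of_exact {f : X ⟶ Y} {g : Y ⟶ Z} [Mono f] [Epi g] (w : f ≫ g = 0)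
    (hfg : (ShortComplex.mk f g w).Exact) : IsShortExactSeq f g :=
  ⟨w, .mk' hfg ‹_› ‹_›⟩

lemma cokernel_π (f : X ⟶ Y) [Mono f] : IsShortExactSeq f (cokernel.π f) :=
  of_exact (cokernel.condition f)
    (ShortComplex.exact_of_g_is_cokernel _ (cokernelIsCokernel f))

lemma biprod_inr_fst (X Y : 𝒜) : IsShortExactSeq (biprod.inr : Y ⟶ X ⊞ Y) biprod.fst :=
  of_exact (by simp) (ShortComplex.Splitting.mk (S := .mk _ _ (by simp))
    biprod.snd biprod.inl (by simp) (by simp) (by ext <;> simp)).exact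

lemma of_isPullback {a : J ⟶ M} {b : M ⟶ Y} (h : IsShortExactSeq a b) {u : X ⟶ Y}
    {fst : P ⟶ M} {snd : P ⟶ X} (sq : IsPullback fst snd b u) {j : J ⟶ P}
    (hj₁ : j ≫ fst = a) (hj₂ : j ≫ snd = 0) : IsShortExactSeq j snd := by
  have := h.mono
  have := h.epi
  have : Mono j := mono_of_mono_fac hj₁
  have : Epi snd := Abelian.epi_snd_of_isLimit _ _ sq.isLimit
  refine of_exact hj₂ (ShortComplex.exact_of_f_is_kernel _
    (KernelFork.IsLimit.ofι' j hj₂ fun {T} t ht => ?_))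
  obtain ⟨l, hl⟩ := KernelFork.IsLimit.lift' h.2.fIsKernel (t ≫ fst)
    (by simp [sq.w, reassoc_of% ht])
  exact ⟨l, sq.hom_ext (by simpa [hj₁] using hl) (by simp [hj₂, ht])⟩

lemma of_isPushout {k : K ⟶ X} {g : X ⟶ Y} (h : IsShortExactSeq k g) {a : K ⟶ J}
    {inl : X ⟶ M} {inr : J ⟶ M} (sq : IsPushout k a inl inr) {q : M ⟶ Y}
    (hq₁ : inl ≫ q = g) (hq₂ : inr ≫ q = 0) : IsShortExactSeq inr q := by
  have := h.mono
  have := h.epi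
  have : Mono inr := Abelian.mono_inr_of_isColimit _ _ sq.isColimit
  have : Epi q := epi_of_epi_fac hq₁
  refine of_exact hq₂ (ShortComplex.exact_of_g_is_cokernel _
    (CokernelCofork.IsColimit.ofπ' q hq₂ fun {T} t ht => ?_))
  obtain ⟨d, hd⟩ := CokernelCofork.IsColimit.desc' h.2.gIsCokernel (inl ≫ t)
    (by simp [sq.w_assoc, ht])
  exact ⟨d, sq.hom_ext (by simpa [reassoc_of% hq₁] using hd) (by simp [reassoc_of% hq₂, ht])⟩

lemma exists_quotient {a : J ⟶ M} {b : M ⟶ Y} (hab : IsShortExactSeq a b)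
    {m : X ⟶ M} {π : M ⟶ Q} (hm : IsShortExactSeq m π) {u : X ⟶ Y} {c : Y ⟶ Z}
    (hu : IsShortExactSeq u c) (fac : m ≫ b = u) :
    ∃ v : Q ⟶ Z, IsShortExactSeq (a ≫ π) v := by
  obtain ⟨v, hv : π ≫ v = b ≫ c⟩ := CokernelCofork.IsColimit.desc' hm.2.gIsCokernel (b ≫ c)
    (by simp [reassoc_of% fac, hu.1])
  have := hab.mono
  have := hu.mono
  have := hm.epi
  have : Epi v := by
    have := hab.epi
    have := hu.epi
    exact epi_of_epi_fac hv
  have : Mono (a ≫ π) := by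
    refine Preadditive.mono_of_cancel_zero _ fun {T} t ht => ?_
    obtain ⟨T', ρ, _, x, hx⟩ := hm.2.exact.exact_up_to_refinements (t ≫ a) (by simpa using ht)
    have hx0 : x = 0 := zero_of_comp_mono u (by rw [← fac, ← reassoc_of% hx]; simp [hab.1])
    rw [← cancel_epi ρ, comp_zero]
    exact zero_of_comp_mono a (by simpa [hx0] using hx)
  refine ⟨v, of_exact (by simp [hv, reassoc_of% hab.1]) ?_⟩
  rw [ShortComplex.exact_iff_exact_up_to_refinements]
  intro A q hq
  obtain ⟨A₁, ρ₁, _, y, hy⟩ := surjective_up_to_refinements_of_epi π q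
  obtain ⟨A₂, ρ₂, _, x, hx⟩ := hu.2.exact.exact_up_to_refinements (y ≫ b)
    (by simp [← hv, ← reassoc_of% hy, hq])
  obtain ⟨A₃, ρ₃, _, j, hj⟩ := hab.2.exact.exact_up_to_refinements (ρ₂ ≫ y - x ≫ m)
    (by simp [hx, fac])
  refine ⟨A₃, ρ₃ ≫ ρ₂ ≫ ρ₁, inferInstance, j, ?_⟩
  calc (ρ₃ ≫ ρ₂ ≫ ρ₁) ≫ q = ρ₃ ≫ (ρ₂ ≫ y - x ≫ m) ≫ π := by simp [hy, hm.1]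
    _ = j ≫ a ≫ π := by rw [reassoc_of% hj]

end IsShortExactSeq

lemma Ext1IsZero.exists_lift {E : 𝒜 → Prop} (hE : IsExtensionClosed E) {X J M Y : 𝒜}
    (hXJ : Ext1IsZero E X J) (hJ : E J) (hX : E X) {a : J ⟶ M} {b : M ⟶ Y}
    (hab : IsShortExactSeq a b) (u : X ⟶ Y) : ∃ m : X ⟶ M, m ≫ b = u := by
  have hj := hab.of_isPullback (IsPullback.of_hasPullback b u)
    (pullback.lift_fst a 0 (by simp [hab.1])) (pullback.lift_snd _ _ _)
  obtain ⟨r, hr⟩ := hXJ _ _ (hE _ _ hj hJ hX) hj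
  have := hj.epi
  let σ := ShortComplex.Splitting.ofExactOfRetraction _ hj.2.exact r hr this
  refine ⟨σ.s ≫ pullback.fst b u, ?_⟩
  have hs : σ.s ≫ pullback.snd b u = 𝟙 X := σ.s_g
  rw [Category.assoc, pullback.condition, reassoc_of% hs]

lemma IsCotorsionPair.isExtensionClosed_left {E C I : 𝒜 → Prop} (cp : IsCotorsionPair E C I)
    (hE : IsExtensionClosed E) : IsExtensionClosed C := by
  intro X Y Z u v huv hX hZ
  obtain ⟨hEX, hXI⟩ := (cp.left_eq X).1 hX
  obtain ⟨hEZ, hZI⟩ := (cp.left_eq Z).1 hZ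
  refine (cp.left_eq Y).2 ⟨hE u v huv hEX hEZ, fun J hJ M a b _ hab => ?_⟩
  have hEJ : E J := ((cp.right_eq J).1 hJ).1
  obtain ⟨m, hm⟩ := (hXI hJ).exists_lift hE hEJ hEX hab u
  have : Mono m := by
    have := huv.mono
    exact mono_of_mono_fac hm
  obtain ⟨q, hq⟩ := hab.exists_quotient (.cokernel_π m) huv hm
  obtain ⟨r, hr⟩ := hZI hJ _ _ (hE _ _ hq hEJ hEZ) hq
  exact ⟨cokernel.π m ≫ r, by simpa using hr⟩

lemma IsAcyclicCofib.isCofib {C Zc : 𝒜 → Prop} {X Y : 𝒜} {f : X ⟶ Y}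
    (h : IsAcyclicCofib C Zc f) : IsCofib C f :=
  let ⟨hX, hY, W, g, hW, _, hfg⟩ := h
  ⟨hX, hY, W, g, hW, hfg⟩

namespace CotorsionSetup

variable {E Cc Ip Zc : 𝒜 → Prop}

lemma isExtensionClosed_left (S : CotorsionSetup E Cc Ip Zc) : IsExtensionClosed Cc :=
  S.cp.isExtensionClosed_left S.extClosedE

lemma e_of_left (S : CotorsionSetup E Cc Ip Zc) {X : 𝒜} (h : Cc X) : E X :=
  ((S.cp.left_eq X).1 h).1

lemma e_of_right (S : CotorsionSetup E Cc Ip Zc) {X : 𝒜} (h : Ip X) : E X :=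
  ((S.cp.right_eq X).1 h).1

lemma exists_left_right (S : CotorsionSetup E Cc Ip Zc) {A : 𝒜} (hA : Cc A) :
    ∃ G, Cc G ∧ Ip G := by
  obtain ⟨I, P, α, β, hI, hP, hαβ⟩ := S.complete.1 A (S.e_of_left hA)
  exact ⟨I, S.isExtensionClosed_left _ _ hαβ hA hP, hI⟩

lemma isWeakEquiv_of_isAcyclicCofib (S : CotorsionSetup E Cc Ip Zc) {X Y : 𝒜} {f : X ⟶ Y}
    (h : IsAcyclicCofib Cc Zc f) : IsWeakEquiv E Cc Ip Zc f := by
  obtain ⟨hX, hY, W, g, hWc, hWz, hfg⟩ := h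
  obtain ⟨G, hGc, hGI⟩ := S.exists_left_right hX
  have hfst := IsShortExactSeq.biprod_inr_fst Y G
  have hYG : Cc (Y ⊞ G) := S.isExtensionClosed_left _ _ hfst hGc hY
  have := hfg.mono
  obtain ⟨q, hq⟩ := hfst.exists_quotient (.cokernel_π (f ≫ biprod.inl)) hfg (by simp)
  have hQc : Cc (cokernel (f ≫ biprod.inl)) := S.isExtensionClosed_left _ _ hq hGc hWc
  have hQz : Zc (cokernel (f ≫ biprod.inl)) :=
    S.zcExtClosed _ _ hq hGc hQc hWc (S.iSubZ hGI) hWz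
  exact ⟨hX, hY, Y ⊞ G, f ≫ biprod.inl, biprod.fst, ⟨hX, hYG, _, _, hQc, hQz, .cokernel_π _⟩,
    ⟨S.e_of_left hYG, S.e_of_left hY, G, biprod.inr, hGI, hfst⟩, by simp⟩

lemma isAcyclicCofib_of_isCofib_of_isWeakEquiv (S : CotorsionSetup E Cc Ip Zc) {X Y : 𝒜}
    {f : X ⟶ Y} (hc : IsCofib Cc f) (hw : IsWeakEquiv E Cc Ip Zc f) :
    IsAcyclicCofib Cc Zc f := by
  obtain ⟨hX, hY, W, g, hWc, hfg⟩ := hc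
  obtain ⟨-, -, M, i, p, ⟨-, -, V, gV, hVc, hVz, hiV⟩, ⟨-, -, K, k, hKI, hkp⟩, hip⟩ := hw
  obtain ⟨q, hq⟩ := hkp.exists_quotient hiV hfg hip
  have hKc : Cc K := S.hereditary _ _ hq (S.e_of_right hKI) hVc hWc
  exact ⟨hX, hY, W, g, hWc, S.zcCokerClosed _ _ hq hKc hVc hWc (S.iSubZ hKI) hVz, hfg⟩

lemma isWeakEquiv_of_isShortExactSeq (S : CotorsionSetup E Cc Ip Zc) {K X Y : 𝒜}
    {k : K ⟶ X} {g : X ⟶ Y} (hX : Cc X) (hY : Cc Y) (hK : Zc K)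
    (hkg : IsShortExactSeq k g) : IsWeakEquiv E Cc Ip Zc g := by
  have hKc : Cc K := S.hereditary k g hkg (S.zSubE hK) hX hY
  obtain ⟨I, P, α, β, hI, hP, hαβ⟩ := S.complete.1 K (S.zSubE hK)
  have hIc : Cc I := S.isExtensionClosed_left _ _ hαβ hKc hP
  have sq := IsPushout.of_hasPushout k α
  have hp := hkg.of_isPushout sq (sq.inl_desc g 0 (by simp [hkg.1])) (sq.inr_desc _ _ _)
  have hr := hαβ.of_isPushout sq.flip (sq.inr_desc 0 β (by simp [hαβ.1])) (sq.inl_desc _ _ _)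
  have hMc : Cc (pushout k α) := S.isExtensionClosed_left _ _ hr hX hP
  have hPz : Zc P := S.zcCokerClosed _ _ hαβ hKc hIc hP hK (S.iSubZ hI)
  exact ⟨hX, hY, _, _, _, ⟨hX, hMc, P, _, hP, hPz, hr⟩,
    ⟨S.extClosedE _ _ hp (S.e_of_right hI) (S.e_of_left hY), S.e_of_left hY, I, _, hI, hp⟩,
    sq.inl_desc _ _ _⟩

end CotorsionSetup

/-- In the standing setup, a morphism between objects of
`Cc` is an acyclic cofibration if and only if it is both a cofibration and a
weak equivalence.  Moreover, every `E`-admissible epimorphism between objects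
of `Cc` whose kernel lies in `Zc` is a weak equivalence. -/
theorem acyclicCofib_iff_cofib_and_weakEquiv
    (E Cc Ip Zc : 𝒜 → Prop) (S : CotorsionSetup E Cc Ip Zc) :
    (∀ ⦃X Y : 𝒜⦄ (f : X ⟶ Y), Cc X → Cc Y →
      (IsAcyclicCofib Cc Zc f ↔ (IsCofib Cc f ∧ IsWeakEquiv E Cc Ip Zc f))) ∧
    (∀ ⦃X Y : 𝒜⦄ (g : X ⟶ Y), Cc X → Cc Y →
      (∃ (K : 𝒜) (k : K ⟶ X), Zc K ∧ IsShortExactSeq k g) →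
      IsWeakEquiv E Cc Ip Zc g) := by
  refine ⟨fun X Y f _ _ => ⟨fun h => ⟨h.isCofib, S.isWeakEquiv_of_isAcyclicCofib h⟩,
    fun ⟨hc, hw⟩ => S.isAcyclicCofib_of_isCofib_of_isWeakEquiv hc hw⟩, ?_⟩
  rintro X Y g hX hY ⟨K, k, hK, hkg⟩
  exact S.isWeakEquiv_of_isShortExactSeq hX hY hK hkg
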